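/- For every β > 0, every m ≥ 2, and every n ≥ m, there exists a goods-allocation instance v with m agents and n goods such that OPT(v) = 1 and every mean-efficient allocation A of v (equivalently, every allocation that can be made proportional with transfers) satisfies β·min_{i ∈ Fin m} v_i(A_i) < OPT(v). Consequently, no proportional mechanism over general instances gives a β-approximation to the optimal egalitarian welfare. -/

import Mathlib

open Finset

noncomputable section

/-- The cost to machine `i` of the bundle of jobs assigned to machine `k` under allocation `A`. -/
def bundleCost {m n : ℕ} (c : Fin m → Fin n → ℝ) (A : Fin n → Fin m) (i k : Fin m) : ℝ :=
  ∑ j ∈ Finset.univ.filter (fun j => A j = k), c i j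

/-- The total cost to machine `i` of all jobs, `c_i([n])`. -/
def rowSum {m n : ℕ} (c : Fin m → Fin n → ℝ) (i : Fin m) : ℝ :=
  ∑ j, c i j

/-- The egalitarian welfare of allocation `A`: the minimum value of any agent. -/
def egalWelfare {m n : ℕ} (hm : 0 < m) (v : Fin m → Fin n → ℝ) (A : Fin n → Fin m) : ℝ :=
  (Finset.univ : Finset (Fin m)).inf' ⟨⟨0, hm⟩, Finset.mem_univ _⟩ fun i => bundleCost v A i i

/-- The optimal (maximum) egalitarian welfare over all allocations. -/
def OPTgoods {m n : ℕ} (hm : 0 < m) (v : Fin m → Fin n → ℝ) : ℝ :=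
  (Finset.univ : Finset (Fin n → Fin m)).sup' ⟨fun _ => ⟨0, hm⟩, Finset.mem_univ _⟩
    fun X => egalWelfare hm v X

lemma sum_indic {n : ℕ} (k : ℕ) (hk : k < n) (f : Fin n → ℝ) :
    (∑ j : Fin n, if (j : ℕ) = k then f j else 0) = f ⟨k, hk⟩ := by
  rw [Finset.sum_eq_single_of_mem (⟨k, hk⟩ : Fin n) (Finset.mem_univ _)]
  · simp
  · intro j _ hj
    rw [if_neg]
    intro h
    exact hj (Fin.ext h)

/-- No proportional mechanism for goods gives any `β`-approximation to the optimal
egalitarian welfare over general instances. -/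
theorem stmt_12 (β : ℝ) (hβ : 0 < β) (m n : ℕ) (hm : 2 ≤ m) (hn : m ≤ n) :
    ∃ v : Fin m → Fin n → ℝ, (∀ i j, 0 ≤ v i j) ∧
      OPTgoods (by omega) v = 1 ∧
      ∀ A : Fin n → Fin m,
        (1 / (m : ℝ)) * ∑ i : Fin m, rowSum v i ≤ ∑ i : Fin m, bundleCost v A i i →
        β * egalWelfare (by omega) v A < OPTgoods (by omega) v := by
  have hn2 : 2 ≤ n := le_trans hm hn
  have hm0 : (0:ℕ) < m := by omega
  set a0 : Fin m := ⟨0, by omega⟩ with ha0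
  set a1 : Fin m := ⟨1, by omega⟩ with ha1
  set g1 : Fin n := ⟨1, by omega⟩ with hg1
  set v : Fin m → Fin n → ℝ := fun i j =>
    if (i : ℕ) = 0 then (if (j : ℕ) = 0 then 1 else if (j : ℕ) = 1 then (m:ℝ)^2 else 0)
    else (if (j : ℕ) = (i : ℕ) then 1 else 0) with hv
  have hmR : (2:ℝ) ≤ (m:ℝ) := by exact_mod_cast hm
  have hvnonneg : ∀ i j, 0 ≤ v i j := by
    intro i j
    simp only [hv]
    split_ifs <;> positivity
  -- row sums
  have hrow0 : rowSum v a0 = 1 + (m:ℝ)^2 := by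
    unfold rowSum
    have : ∀ j : Fin n, v a0 j =
        (if (j:ℕ) = 0 then (1:ℝ) else 0) + (if (j:ℕ) = 1 then (m:ℝ)^2 else 0) := by
      intro j
      simp only [hv, ha0]
      split_ifs with h1 h2 <;> simp_all
    rw [Finset.sum_congr rfl (fun j _ => this j), Finset.sum_add_distrib,
      sum_indic 0 (by omega), sum_indic 1 (by omega)]
  have hrowi : ∀ i : Fin m, i ≠ a0 → rowSum v i = 1 := by
    intro i hi
    have hi' : (i:ℕ) ≠ 0 := fun h => hi (Fin.ext h)
    unfold rowSum
    have : ∀ j : Fin n, v i j = (if (j:ℕ) = (i:ℕ) then (1:ℝ) else 0) := by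
      intro j; simp only [hv, if_neg hi']
    rw [Finset.sum_congr rfl (fun j _ => this j), sum_indic (i:ℕ) (by omega)]
  -- bundleCost ≤ rowSum
  have hble : ∀ (A : Fin n → Fin m) (i k : Fin m), bundleCost v A i k ≤ rowSum v i := by
    intro A i k
    exact Finset.sum_le_sum_of_subset_of_nonneg (Finset.filter_subset _ _)
      (fun j _ _ => hvnonneg i j)
  have hbnonneg : ∀ (A : Fin n → Fin m) (i k : Fin m), 0 ≤ bundleCost v A i k := by
    intro A i k
    exact Finset.sum_nonneg (fun j _ => hvnonneg i j)
  -- OPT = 1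
  have hOPT : OPTgoods hm0 v = 1 := by
    apply le_antisymm
    · apply Finset.sup'_le
      intro A _
      calc egalWelfare hm0 v A ≤ bundleCost v A a1 a1 :=
            Finset.inf'_le _ (Finset.mem_univ _)
        _ ≤ rowSum v a1 := hble A a1 a1
        _ = 1 := hrowi a1 (by simp [ha0, ha1, Fin.ext_iff])
    · -- witness allocation
      set Astar : Fin n → Fin m := fun j => if h : (j:ℕ) < m then ⟨j, h⟩ else a0 with hAstar
      refine le_trans ?_ (Finset.le_sup' (fun X => egalWelfare hm0 v X) (Finset.mem_univ Astar))
      apply Finset.le_inf'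
      intro i _
      have hi : (i:ℕ) < n := lt_of_lt_of_le i.2 hn
      have hmem : (⟨(i:ℕ), hi⟩ : Fin n) ∈ Finset.univ.filter (fun j => Astar j = i) := by
        simp only [Finset.mem_filter, Finset.mem_univ, true_and, hAstar]
        rw [dif_pos i.2]
      have hval : v i ⟨(i:ℕ), hi⟩ = 1 := by
        simp only [hv]
        by_cases h : (i:ℕ) = 0 <;> simp [h]
      calc (1:ℝ) = v i ⟨(i:ℕ), hi⟩ := hval.symm
        _ ≤ bundleCost v Astar i i :=
            Finset.single_le_sum (fun j _ => hvnonneg i j) hmem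
  refine ⟨v, hvnonneg, hOPT, ?_⟩
  intro A hA
  rw [hOPT] at *
  -- total row sum
  have htot : ∑ i : Fin m, rowSum v i = (m:ℝ)^2 + m := by
    rw [← Finset.add_sum_erase _ _ (Finset.mem_univ a0), hrow0]
    have : ∀ i ∈ Finset.univ.erase a0, rowSum v i = 1 := fun i hi =>
      hrowi i (Finset.ne_of_mem_erase hi)
    rw [Finset.sum_congr rfl this, Finset.sum_const, Finset.card_erase_of_mem (Finset.mem_univ _),
      Finset.card_univ, Fintype.card_fin, nsmul_eq_mul]
    have h1 : (1:ℕ) ≤ m := by omega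
    push_cast [h1]
    ring
  have hmpos : (0:ℝ) < m := by linarith
  have hA' : (m:ℝ) + 1 ≤ ∑ i : Fin m, bundleCost v A i i := by
    have h1 : (1 / (m:ℝ)) * ((m:ℝ)^2 + m) = (m:ℝ) + 1 := by
      field_simp
    rw [htot, h1] at hA
    exact hA
  -- must assign g1 to a0
  have hAg1 : A g1 = a0 := by
    by_contra hne
    -- then every bundleCost ≤ 1
    have hb0 : bundleCost v A a0 a0 ≤ 1 := by
      unfold bundleCost
      have hsub : ∀ j ∈ Finset.univ.filter (fun j => A j = a0), v a0 j ≤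
          (if (j:ℕ) = 0 then (1:ℝ) else 0) := by
        intro j hj
        have hjne : j ≠ g1 := by
          intro h; subst h; exact hne ((Finset.mem_filter.mp hj).2)
        have hjne' : (j:ℕ) ≠ 1 := fun h => hjne (Fin.ext h)
        simp only [hv, ha0, if_pos rfl, if_neg hjne']
        split_ifs <;> norm_num
      calc ∑ j ∈ Finset.univ.filter (fun j => A j = a0), v a0 j
          ≤ ∑ j ∈ Finset.univ.filter (fun j => A j = a0),
              (if (j:ℕ) = 0 then (1:ℝ) else 0) := Finset.sum_le_sum hsub
        _ ≤ ∑ j : Fin n, (if (j:ℕ) = 0 then (1:ℝ) else 0) :=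
            Finset.sum_le_sum_of_subset_of_nonneg (Finset.filter_subset _ _)
              (fun j _ _ => by split_ifs <;> norm_num)
        _ = 1 := sum_indic 0 (by omega) _
    have hsum : ∑ i : Fin m, bundleCost v A i i ≤ (m:ℝ) := by
      have hbound : ∀ i : Fin m, bundleCost v A i i ≤ 1 := by
        intro i
        by_cases hi : i = a0
        · rw [hi]; exact hb0
        · exact le_trans (hble A i i) (le_of_eq (hrowi i hi))
      calc ∑ i : Fin m, bundleCost v A i i ≤ ∑ _i : Fin m, (1:ℝ) :=
            Finset.sum_le_sum (fun i _ => hbound i)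
        _ = (m:ℝ) := by simp
    linarith
  -- agent a1 gets nothing of value
  have hb1 : bundleCost v A a1 a1 = 0 := by
    unfold bundleCost
    apply Finset.sum_eq_zero
    intro j hj
    have hAj : A j = a1 := (Finset.mem_filter.mp hj).2
    have hjne : (j:ℕ) ≠ 1 := by
      intro h
      have : j = g1 := Fin.ext h
      rw [this, hAg1] at hAj
      exact absurd (congrArg Fin.val hAj) (by simp [ha0, ha1])
    simp only [hv, ha1]
    rw [if_neg (by norm_num), if_neg hjne]
  have hegal : egalWelfare hm0 v A ≤ 0 := by
    calc egalWelfare hm0 v A ≤ bundleCost v A a1 a1 := Finset.inf'_le _ (Finset.mem_univ _)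
      _ = 0 := hb1
  nlinarith [mul_nonneg hβ.le (neg_nonneg.mpr hegal)]
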